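/- Let (R, m) be a Noetherian local ring, a an ideal, M a finitely generated R-module, and i an integer. If F^i_a(M) is an Artinian R-module, then CoSupp F^i_a(M) ⊆ V(a). -/

import Mathlib

open CategoryTheory CategoryTheory.Limits IsLocalRing DirectSum

noncomputable section

/-- The inverse system `n ↦ M ⧸ aⁿM` with the natural projection maps. -/
def formalQuotDiagram (R : Type) [CommRing R] (a : Ideal R)
    (M : Type) [AddCommGroup M] [Module R M] : ℕᵒᵖ ⥤ ModuleCat R :=
  CategoryTheory.Functor.ofOpSequence
    (X := fun n => ModuleCat.of R (M ⧸ (a ^ n • ⊤ : Submodule R M)))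
    (fun n => ModuleCat.ofHom (Submodule.mapQ _ _ LinearMap.id (by
      simpa using Submodule.smul_mono (Ideal.pow_le_pow_right n.le_succ) le_rfl)))

/-- Formal local cohomology `𝔉ⁱ_a(M) = lim_n Hⁱ_m(M ⧸ aⁿM)`. -/
def formalLocalCohomology (R : Type) [CommRing R] [IsLocalRing R] (a : Ideal R) (i : ℕ)
    (M : Type) [AddCommGroup M] [Module R M] : ModuleCat R :=
  limit (formalQuotDiagram R a M ⋙ localCohomology (maximalIdeal R) i)

/-- Attached primes of a module: primes of the form `Ann(M/N)`. -/
def attachedPrimes (R : Type) [CommRing R] (M : Type) [AddCommGroup M] [Module R M] :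
    Set (Ideal R) :=
  {p | p.IsPrime ∧ ∃ N : Submodule R M, p = Module.annihilator R (M ⧸ N)}

/-- `E` is an injective hull (injective essential extension) of `N`. -/
def IsInjectiveHull (R : Type) [CommRing R] (N : Type) [AddCommGroup N] [Module R N]
    (E : Type) [AddCommGroup E] [Module R E] : Prop :=
  Module.Injective R E ∧ ∃ f : N →ₗ[R] E, Function.Injective f ∧
    ∀ S : Submodule R E, S ≠ ⊥ → S ⊓ LinearMap.range f ≠ ⊥

/-- The module `⊕_{m maximal} R/m`, whose injective hull is the minimal injective
cogenerator `E_R`. -/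
def cogenerator (R : Type) [CommRing R] : Type :=
  ⨁ m : MaximalSpectrum R, R ⧸ m.asIdeal

instance (R : Type) [CommRing R] : AddCommGroup (cogenerator R) := by
  unfold cogenerator; infer_instance

instance (R : Type) [CommRing R] : Module R (cogenerator R) := by
  unfold cogenerator; infer_instance

/-- Richardson's cosupport, via colocalization: `p ∈ CoSupp M` iff
`ᵖM = D_{R_p}((D_R M)_p) ≠ 0`, where `D` denotes duals into minimal injective
cogenerators (injective hulls of the direct sum of the residue fields). -/
def CoSupport (R : Type) [CommRing R] (M : Type) [AddCommGroup M] [Module R M] :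
    Set (PrimeSpectrum R) :=
  {p | ∀ (E : Type) [AddCommGroup E] [Module R E], IsInjectiveHull R (cogenerator R) E →
       ∀ (Ep : Type) [AddCommGroup Ep] [Module (Localization.AtPrime p.asIdeal) Ep],
         IsInjectiveHull (Localization.AtPrime p.asIdeal)
           (cogenerator (Localization.AtPrime p.asIdeal)) Ep →
       Nontrivial ((LocalizedModule p.asIdeal.primeCompl (M →ₗ[R] E))
          →ₗ[Localization.AtPrime p.asIdeal] Ep)}

/-- Coassociated primes over a local ring: `Coass M = Ass Hom_R(M, E(R/m))`. -/
def Coassociated (R : Type) [CommRing R] [IsLocalRing R]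
    (M : Type) [AddCommGroup M] [Module R M] : Set (PrimeSpectrum R) :=
  {p | ∀ (E : Type) [AddCommGroup E] [Module R E],
        IsInjectiveHull R (R ⧸ maximalIdeal R) E →
        p.asIdeal ∈ associatedPrimes R (M →ₗ[R] E)}

/-- The height of an ideal. -/
def idealHeight (R : Type) [CommRing R] (a : Ideal R) : ℕ∞ :=
  sInf {n | ∃ p : PrimeSpectrum R, a ≤ p.asIdeal ∧ Order.height p = n}

/-- The `a`-torsion submodule `H⁰_a(M) = ∪ₙ (0 :_M aⁿ)`. -/
def idealTorsion (R : Type) [CommRing R] (a : Ideal R)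
    (M : Type) [AddCommGroup M] [Module R M] : Submodule R M :=
  ⨆ n : ℕ, Submodule.torsionBySet R M ((a ^ n : Ideal R) : Set R)

/-- A Noetherian local ring is Gorenstein iff it has finite injective dimension
over itself, i.e. `Extⁱ(N, R) = 0` for all `i` larger than some bound and all `N`. -/
def IsGorensteinLocalRing (R : Type) [CommRing R] : Prop :=
  IsNoetherianRing R ∧ IsLocalRing R ∧
    ∃ n : ℕ, ∀ i : ℕ, n < i → ∀ N : ModuleCat R,
      Subsingleton (((Ext R (ModuleCat R) i).obj (Opposite.op N)).obj (ModuleCat.of R R))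

end

/-!
Every term `Hⁱ_m(M ⧸ aⁿM)` of the inverse system is killed by `aⁿ`: `Ext(N, -)`, and hence
local cohomology, inherits the annihilator of its argument. So `𝔉 = 𝔉ⁱ_a(M)` is `a`-adically
separated. If `𝔉` is Artinian, the chain `aⁿ𝔉` stabilizes, and separatedness forces its stable
value to be `0`, i.e. `a^N ⊆ Ann 𝔉`. Finally, cosupport always lies in `V(Ann 𝔉)`: an element
`s ∈ Ann 𝔉 \ p` acts on `Hom(𝔉, E)_p` both invertibly and by zero, so the colocalization vanishes.
This needs injective hulls to exist; they are maximal essential extensions inside an injective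
module.
-/

universe u v

open Opposite

namespace Module

theorem exists_embedding_into_injective (R : Type u) [Ring R] [Small.{v} R]
    (N : Type v) [AddCommGroup N] [Module R N] :
    ∃ (E : Type v) (_ : AddCommGroup E) (_ : Module R E), Module.Injective R E ∧
      ∃ f : N →ₗ[R] E, Function.Injective f := by
  let J := CategoryTheory.Injective.under (ModuleCat.of R N)
  have : CategoryTheory.Injective (ModuleCat.of R J) :=
    inferInstanceAs (CategoryTheory.Injective J)
  exact ⟨J, inferInstance, inferInstance, injective_module_of_injective_object R J,
    (CategoryTheory.Injective.ι (ModuleCat.of R N)).hom,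
    (ModuleCat.mono_iff_injective _).mp inferInstance⟩

theorem Injective.of_retraction {R : Type u} [Ring R] [Small.{v} R]
    {S E : Type v} [AddCommGroup S] [Module R S] [AddCommGroup E] [Module R E]
    [Module.Injective R E] (i : S →ₗ[R] E) (p : E →ₗ[R] S) (h : p ∘ₗ i = LinearMap.id) :
    Module.Injective R S :=
  have : CategoryTheory.Injective (ModuleCat.of R E) := (injective_iff_injective_object R E).mp ‹_›
  (injective_iff_injective_object R S).mpr
    (Retract.injective ⟨ModuleCat.ofHom i, ModuleCat.ofHom p, by ext x; exact congr($h x)⟩)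

end Module

namespace Submodule

variable {R : Type u} [Ring R] {E : Type v} [AddCommGroup E] [Module R E]

def IsEssentialOver (N S : Submodule R E) : Prop :=
  N ≤ S ∧ ∀ x ∈ S, x ≠ 0 → ∃ r : R, r • x ≠ 0 ∧ r • x ∈ N

theorem IsEssentialOver.refl (N : Submodule R E) : IsEssentialOver N N :=
  ⟨le_rfl, fun x hx hx0 => ⟨1, by rwa [one_smul], by rwa [one_smul]⟩⟩

theorem IsEssentialOver.trans {N S U : Submodule R E} (hNS : IsEssentialOver N S)
    (hSU : IsEssentialOver S U) : IsEssentialOver N U := by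
  refine ⟨hNS.1.trans hSU.1, fun x hx hx0 => ?_⟩
  obtain ⟨r, hr0, hrS⟩ := hSU.2 x hx hx0
  obtain ⟨r', hr'0, hr'N⟩ := hNS.2 _ hrS hr0
  exact ⟨r' * r, by rwa [mul_smul], by rwa [mul_smul]⟩

theorem IsEssentialOver.map {E' : Type*} [AddCommGroup E'] [Module R E'] {N S : Submodule R E}
    (h : IsEssentialOver N S) {f : E →ₗ[R] E'} (hf : Function.Injective f) :
    IsEssentialOver (N.map f) (S.map f) := by
  refine ⟨Submodule.map_mono h.1, ?_⟩
  rintro _ ⟨x, hx, rfl⟩ hx0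
  obtain ⟨r, hr0, hrN⟩ := h.2 x hx (fun h0 => hx0 (by rw [h0, map_zero]))
  exact ⟨r, by rwa [← map_smul, ne_eq, map_eq_zero_iff f hf], by
    rw [← map_smul]; exact Submodule.mem_map_of_mem hrN⟩

theorem IsEssentialOver.injective_of_disjoint_ker {E' : Type*} [AddCommGroup E'] [Module R E']
    {N : Submodule R E} (h : IsEssentialOver N ⊤) {f : E →ₗ[R] E'}
    (hf : Disjoint (LinearMap.ker f) N) : Function.Injective f := by
  refine (injective_iff_map_eq_zero f).mpr fun x hfx => by_contra fun hx0 => ?_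
  obtain ⟨r, hr0, hrN⟩ := h.2 x trivial hx0
  refine hr0 (Submodule.disjoint_def.mp hf _ ?_ hrN)
  rw [LinearMap.mem_ker, map_smul, hfx, smul_zero]

theorem exists_maximal_isEssentialOver (N : Submodule R E) :
    ∃ S, Maximal (IsEssentialOver N) S := by
  obtain ⟨S, -, hS⟩ := zorn_le_nonempty₀ {S | IsEssentialOver N S} (fun c hc hchain y hy => by
    refine ⟨sSup c, ⟨(hc hy).1.trans (le_sSup hy), fun x hx hx0 => ?_⟩, fun z hz => le_sSup hz⟩
    obtain ⟨S, hSc, hxS⟩ := (Submodule.mem_sSup_of_directed ⟨y, hy⟩ hchain.directedOn).mp hx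
    exact (hc hSc).2 x hxS hx0) N (IsEssentialOver.refl N)
  exact ⟨S, hS⟩

theorem exists_maximal_disjoint (S : Submodule R E) : ∃ T, Maximal (Disjoint · S) T := by
  obtain ⟨T, -, hT⟩ := zorn_le_nonempty₀ {T | Disjoint T S} (fun c hc hchain y hy =>
    ⟨sSup c, (hchain.directedOn.disjoint_sSup_left).mpr fun T hT => hc hT,
      fun z hz => le_sSup hz⟩) ⊥ disjoint_bot_left
  exact ⟨T, hT⟩

theorem isEssentialOver_map_mkQ_of_maximal_disjoint {S T : Submodule R E}
    (hT : Maximal (Disjoint · S) T) : IsEssentialOver (S.map T.mkQ) ⊤ := by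
  refine ⟨le_top, fun z _ hz => ?_⟩
  obtain ⟨x, rfl⟩ := T.mkQ_surjective z
  have hxT : x ∉ T := fun hxT => hz ((Submodule.Quotient.mk_eq_zero T).mpr hxT)
  have hmeet : ¬ Disjoint (T ⊔ span R {x}) S := fun hdisj =>
    hxT (hT.2 hdisj le_sup_left (mem_sup_right (mem_span_singleton_self x)))
  simp only [disjoint_def, not_forall] at hmeet
  obtain ⟨w, hw, hwS, hw0⟩ := hmeet
  obtain ⟨t, ht, _, hu, rfl⟩ := mem_sup.mp hw
  obtain ⟨r, rfl⟩ := mem_span_singleton.mp hu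
  have hqw : T.mkQ (t + r • x) = r • T.mkQ x := by
    have ht0 : T.mkQ t = 0 := (Quotient.mk_eq_zero T).mpr ht
    rw [map_add, map_smul, ht0, zero_add]
  refine ⟨r, fun h0 => hw0 (disjoint_def.mp hT.1 _ ?_ hwS), ⟨_, hwS, hqw⟩⟩
  rwa [← Quotient.mk_eq_zero T, ← mkQ_apply, hqw]

end Submodule

open Submodule in
theorem Module.Injective.of_maximal_isEssentialOver {R : Type u} [Ring R] [Small.{v} R]
    {E : Type v} [AddCommGroup E] [Module R E] [Module.Injective R E] {N S : Submodule R E}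
    (hS : Maximal (IsEssentialOver N) S) : Module.Injective R S := by
  -- For `T` maximal disjoint from `S`, `S` embeds essentially into `E ⧸ T`. Extending `S ⊆ E`
  -- along this embedding gives an injective `g : E ⧸ T → E` whose range is essential over `S`,
  -- hence equal to `S` by maximality; so `g ∘ mkQ` retracts `E` onto `S`.
  obtain ⟨T, hT⟩ := exists_maximal_disjoint S
  have hqS : Function.Injective (T.mkQ ∘ₗ S.subtype) := by
    refine (injective_iff_map_eq_zero _).mpr fun s hs => Subtype.ext ?_
    exact disjoint_def.mp hT.1 _ ((Quotient.mk_eq_zero T).mp hs) s.2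
  obtain ⟨g, hg⟩ := Module.Injective.extension_property R E S (E ⧸ T) _ hqS S.subtype
  have hgq (s : S) : g (T.mkQ s) = s := congr($hg s)
  have hess := isEssentialOver_map_mkQ_of_maximal_disjoint hT
  have hg_inj : Function.Injective g := hess.injective_of_disjoint_ker <| by
    rw [disjoint_def]
    rintro _ hx ⟨s, hs, rfl⟩
    have hs0 : s = 0 := (hgq ⟨s, hs⟩).symm.trans (LinearMap.mem_ker.mp hx)
    rw [hs0, map_zero]
  have hgS : (S.map T.mkQ).map g = S := by
    ext x
    refine ⟨?_, fun hx => ⟨T.mkQ x, ⟨x, hx, rfl⟩, hgq ⟨x, hx⟩⟩⟩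
    rintro ⟨_, ⟨s, hs, rfl⟩, rfl⟩
    rwa [hgq ⟨s, hs⟩]
  have hrange : LinearMap.range g = S := by
    have h := hess.map hg_inj
    rw [hgS, Submodule.map_top] at h
    exact le_antisymm (hS.2 (hS.1.trans h) h.1) h.1
  let p : E →ₗ[R] S := (g ∘ₗ T.mkQ).codRestrict S fun x => hrange ▸ ⟨_, rfl⟩
  exact Module.Injective.of_retraction S.subtype p (LinearMap.ext fun s => Subtype.ext (hgq s))

theorem exists_isInjectiveHull (R : Type) [CommRing R] (N : Type) [AddCommGroup N]
    [Module R N] : ∃ (E : Type) (_ : AddCommGroup E) (_ : Module R E), IsInjectiveHull R N E := by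
  obtain ⟨E₀, _, _, _, f₀, hf₀⟩ := Module.exists_embedding_into_injective R N
  obtain ⟨S, hS⟩ := Submodule.exists_maximal_isEssentialOver (LinearMap.range f₀)
  refine ⟨S, inferInstance, inferInstance, Module.Injective.of_maximal_isEssentialOver hS,
    f₀.codRestrict S fun n => hS.1.1 ⟨n, rfl⟩, fun x y hxy => hf₀ congr(($hxy : E₀)),
    fun W hW => ?_⟩
  obtain ⟨x, hxW, hx0⟩ := Submodule.exists_mem_ne_zero_of_ne_bot hW
  obtain ⟨r, hr0, n, hn⟩ := hS.1.2 x x.2 (by simpa using hx0)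
  exact (Submodule.ne_bot_iff _).mpr
    ⟨r • x, ⟨W.smul_mem r hxW, n, Subtype.ext hn⟩, fun h => hr0 congr(($h : E₀))⟩

section SmulId

variable {R : Type u} [CommRing R]

theorem CategoryTheory.Iso.smul_id_eq_zero {C : Type*} [Category C] [Preadditive C] [Linear R C]
    {X Y : C} (e : X ≅ Y) {r : R} (h : r • 𝟙 Y = 0) : r • 𝟙 X = 0 :=
  calc r • 𝟙 X = e.hom ≫ (r • 𝟙 Y) ≫ e.inv := by
        rw [Linear.smul_comp, Linear.comp_smul, Category.id_comp, e.hom_inv_id]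
    _ = 0 := by rw [h, zero_comp, comp_zero]

theorem CategoryTheory.Limits.IsColimit.smul_id_eq_zero {C J : Type*} [Category C]
    [Preadditive C] [Linear R C] [Category J] {F : J ⥤ C} {c : Cocone F} (hc : IsColimit c)
    {r : R} (h : ∀ j, r • 𝟙 (F.obj j) = 0) : r • 𝟙 c.pt = 0 :=
  hc.hom_ext fun j => by
    rw [Linear.comp_smul, Category.comp_id, ← Category.id_comp (c.ι.app j), ← Linear.smul_comp,
      h, zero_comp, comp_zero]

theorem HomologicalComplex.homologyMap_smul {C ι : Type*} [Category C] [Preadditive C]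
    [Linear R C] {c : ComplexShape ι} {K L : HomologicalComplex C c} (f : K ⟶ L) (r : R) (i : ι)
    [K.HasHomology i] [L.HasHomology i] :
    homologyMap (r • f) i = r • homologyMap f i :=
  ShortComplex.homologyMap_smul ((shortComplexFunctor C c i).map f) r

theorem ModuleCat.smul_id_eq_zero_iff (X : ModuleCat.{v} R) (r : R) :
    r • 𝟙 X = 0 ↔ r ∈ Module.annihilator R X := by
  rw [Module.mem_annihilator_iff_lsmul_eq_zero, ← ModuleCat.lsmul_eq_smul_id]
  exact ⟨fun h => congr(ModuleCat.Hom.hom $h), fun h => by rw [h]; rfl⟩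

theorem Ext.smul_id_eq_zero {C : Type*} [Category C] [Abelian C] [Linear R C]
    [EnoughProjectives C] (N : C) {X : C} {r : R} (hr : r • 𝟙 X = 0) (i : ℕ) :
    r • 𝟙 (((Ext R C i).obj (op N)).obj X) = 0 := by
  let P := projectiveResolution N
  have hcomplex : r • 𝟙 (P.complex.linearYonedaObj R X) = 0 := by
    ext n (φ : P.complex.X n ⟶ X)
    change r • φ = 0
    rw [← Category.comp_id φ, ← Linear.comp_smul (R := R), hr, comp_zero]
  refine (P.isoExt (R := R) i X).smul_id_eq_zero (R := R) ?_
  rw [← HomologicalComplex.homologyMap_id, ← HomologicalComplex.homologyMap_smul, hcomplex,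
    HomologicalComplex.homologyMap_zero]

end SmulId

theorem localCohomology.annihilator_le_annihilator_ofDiagram {R : Type max u v} [CommRing R]
    {D : Type v} [SmallCategory D] (I : D ⥤ Ideal R) (i : ℕ) (X : ModuleCat.{max u v} R) :
    Module.annihilator R X ≤ Module.annihilator R ((localCohomology.ofDiagram I i).obj X) := by
  intro r hr
  have := localCohomology.hasColimitDiagram.{u, v} I i
  rw [← ModuleCat.smul_id_eq_zero_iff] at hr ⊢
  exact (isColimitOfPreserves ((evaluation _ _).obj X)
    (colimit.isColimit (localCohomology.diagram I i))).smul_id_eq_zero (R := R)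
      fun j => Ext.smul_id_eq_zero _ hr i

theorem ModuleCat.isHausdorff_limit {R : Type u} [CommRing R] (a : Ideal R)
    (F : ℕᵒᵖ ⥤ ModuleCat.{u} R) (hF : ∀ n, a ^ n ≤ Module.annihilator R (F.obj (op n))) :
    IsHausdorff a (limit F : ModuleCat R) := by
  refine ⟨fun x hx => Concrete.limit_ext F x 0 fun j => ?_⟩
  obtain ⟨n⟩ := j
  have hπx : (limit.π F (op n)).hom x ∈ a ^ n • (⊤ : Submodule R (F.obj (op n))) := by
    have := Submodule.mem_map_of_mem (f := (limit.π F (op n)).hom) (SModEq.zero.mp (hx n))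
    rw [Submodule.map_smul''] at this
    exact Submodule.smul_mono le_rfl le_top this
  have hFn := hF n
  rw [← Submodule.annihilator_top, Submodule.le_annihilator_iff] at hFn
  rw [hFn, Submodule.mem_bot] at hπx
  exact hπx.trans (map_zero _).symm

theorem Ideal.le_annihilator_quotient_smul_top {R M : Type*} [CommRing R] [AddCommGroup M]
    [Module R M] (I : Ideal R) : I ≤ Module.annihilator R (M ⧸ (I • ⊤ : Submodule R M)) := by
  intro r hr
  rw [Module.mem_annihilator]
  rintro ⟨m⟩
  exact (Submodule.Quotient.mk_eq_zero _).mpr (Submodule.smul_mem_smul hr Submodule.mem_top)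

instance formalLocalCohomology.isHausdorff (R : Type) [CommRing R] [IsLocalRing R] (a : Ideal R)
    (i : ℕ) (M : Type) [AddCommGroup M] [Module R M] :
    IsHausdorff a (formalLocalCohomology R a i M) :=
  ModuleCat.isHausdorff_limit a _ fun n =>
    (Ideal.le_annihilator_quotient_smul_top (M := M) (a ^ n)).trans
      (localCohomology.annihilator_le_annihilator_ofDiagram _ i
        ((formalQuotDiagram R a M).obj (op n)))

theorem IsArtinian.exists_pow_le_annihilator {R M : Type*} [CommRing R] [AddCommGroup M]
    [Module R M] [IsArtinian R M] (a : Ideal R) [IsHausdorff a M] :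
    ∃ N, a ^ N ≤ Module.annihilator R M := by
  obtain ⟨N, hN⟩ := IsArtinian.monotone_stabilizes
    ⟨fun n => (a ^ n • ⊤ : Submodule R M), fun _ _ hnm =>
      Submodule.smul_mono_left (Ideal.pow_le_pow_right hnm)⟩
  refine ⟨N, ?_⟩
  rw [← Submodule.annihilator_top, Submodule.le_annihilator_iff, eq_bot_iff]
  intro x hx
  refine (Submodule.mem_bot R).mpr (IsHausdorff.haus ‹_› x fun n => SModEq.zero.mpr ?_)
  have hstab : (a ^ N • ⊤ : Submodule R M) = a ^ max n N • ⊤ := hN _ (le_max_right n N)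
  rw [hstab] at hx
  exact Submodule.smul_mono_left (Ideal.pow_le_pow_right (le_max_left n N)) hx

theorem coSupport_subset_zeroLocus_annihilator (R : Type) [CommRing R] (M : Type)
    [AddCommGroup M] [Module R M] :
    CoSupport R M ⊆ PrimeSpectrum.zeroLocus (Module.annihilator R M) := by
  intro p hp s hs
  by_contra hsp
  obtain ⟨E, _, _, hE⟩ := exists_isInjectiveHull R (cogenerator R)
  obtain ⟨Ep, _, _, hEp⟩ :=
    exists_isInjectiveHull (Localization.AtPrime p.asIdeal)
      (cogenerator (Localization.AtPrime p.asIdeal))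
  have : Subsingleton (LocalizedModule p.asIdeal.primeCompl (M →ₗ[R] E)) :=
    LocalizedModule.subsingleton_iff.mpr fun f => ⟨s, hsp, LinearMap.ext fun x => by
      rw [LinearMap.smul_apply, ← map_smul, Module.mem_annihilator.mp hs, map_zero,
        LinearMap.zero_apply]⟩
  have hnontrivial := hp E hE Ep hEp
  exact false_of_nontrivial_of_subsingleton
    (LocalizedModule p.asIdeal.primeCompl (M →ₗ[R] E) →ₗ[Localization.AtPrime p.asIdeal] Ep)

theorem stmt9_general (R : Type) [CommRing R] [IsLocalRing R]
    (a : Ideal R) (M : Type) [AddCommGroup M] [Module R M]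
    (i : ℕ) (h : IsArtinian R (formalLocalCohomology R a i M)) :
    CoSupport R (formalLocalCohomology R a i M) ⊆
      PrimeSpectrum.zeroLocus (a : Set R) := by
  obtain ⟨N, hN⟩ := IsArtinian.exists_pow_le_annihilator (M := formalLocalCohomology R a i M) a
  intro p hp
  have hann := coSupport_subset_zeroLocus_annihilator R _ hp
  rw [PrimeSpectrum.mem_zeroLocus, SetLike.coe_subset_coe] at hann ⊢
  exact p.isPrime.le_of_pow_le (hN.trans hann)

/-- if `𝔉ⁱ_a(M)` is Artinian, then `CoSupp 𝔉ⁱ_a(M) ⊆ V(a)`. -/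
theorem stmt9 (R : Type) [CommRing R] [IsNoetherianRing R] [IsLocalRing R]
    (a : Ideal R) (M : Type) [AddCommGroup M] [Module R M] [Module.Finite R M]
    (i : ℕ) (h : IsArtinian R (formalLocalCohomology R a i M)) :
    CoSupport R (formalLocalCohomology R a i M) ⊆
      PrimeSpectrum.zeroLocus (a : Set R) :=
  stmt9_general R a M i h
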